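/- arXiv:1611.07921 — 2 statements merged into one kernel-verified Lean document; each statement's English description precedes it below -/
import Mathlib

section
/- Let Γ be a countable group and let H ≤ Γ be a subgroup such that the left translation action of Γ on the coset space Γ/H is highly faithful, meaning: for any finite list γ₁,…,γₙ of non-identity elements of Γ there exists x ∈ Γ/H with γᵢ·x ≠ x for all i ≤ n. Then for every such γ₁,…,γₙ and every ε with 0 < ε < 1 there is a unit vector f ∈ ℓ²(Γ/H) such that |⟨γᵢ·f, f⟩| ≤ ε for each 1 ≤ i ≤ n, where Γ acts on ℓ²(Γ/H) by the quasi-regular representation (γ·f)(x) = f(γ⁻¹·x). -/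
open scoped ComplexConjugate

/-! If `x` is moved by every `γᵢ`, the Dirac vector `δ_x` works for every `ε ≥ 0`: its translate
`γᵢ · δ_x = δ_{γᵢ x}` is orthogonal to it, so each coefficient `⟨γᵢ · δ_x, δ_x⟩` vanishes. -/

theorem tsum_lp_single_smul_mul_conj_eq_zero {G X : Type*} [Group G] [MulAction G X]
    [DecidableEq X] {g : G} {x : X} (hx : g • x ≠ x) :
    let δ : lp (fun _ : X => ℂ) 2 := lp.single 2 x 1
    ∑' y : X, δ (g⁻¹ • y) * conj (δ y) = 0 := by
  intro δ
  have hx' : g⁻¹ • x ≠ x := fun h => hx (inv_smul_eq_iff.mp h).symm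
  rw [tsum_eq_single x fun y hy => by rw [lp.single_apply_ne 2 x _ hy, map_zero, mul_zero]]
  rw [lp.single_apply_ne 2 x _ hx', zero_mul]

theorem highlyFaithful_exists_almost_orthogonal_unit_vector_general
    {Γ : Type*} [Group Γ] (H : Subgroup Γ)
    (hhf : ∀ (n : ℕ) (γ : Fin n → Γ), (∀ i, γ i ≠ 1) →
      ∃ x : Γ ⧸ H, ∀ i, γ i • x ≠ x) :
    ∀ (n : ℕ) (γ : Fin n → Γ), (∀ i, γ i ≠ 1) → ∀ ε : ℝ, 0 < ε → ε < 1 →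
      ∃ f : lp (fun _ : Γ ⧸ H => ℂ) 2, ‖f‖ = 1 ∧
        ∀ i, ‖∑' x : Γ ⧸ H, f ((γ i)⁻¹ • x) * conj (f x)‖ ≤ ε := by
  classical
  intro n γ hγ ε hε _
  obtain ⟨x, hx⟩ := hhf n γ hγ
  refine ⟨lp.single 2 x 1, ?_, fun i => ?_⟩
  · simp [lp.norm_single (E := fun _ : Γ ⧸ H => ℂ) (p := 2) (by norm_num) x 1]
  · rw [tsum_lp_single_smul_mul_conj_eq_zero (hx i), norm_zero]
    exact hε.le

/-- If the left translation action of a countable group `Γ` on `Γ/H` is highly faithful,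
then for any non-identity elements `γ₁,…,γₙ` and `0 < ε < 1` there is a unit vector
`f ∈ ℓ²(Γ/H)` with `|⟨γᵢ·f, f⟩| ≤ ε` for all `i`, for the quasi-regular representation
`(γ·f)(x) = f(γ⁻¹·x)`. -/
theorem highlyFaithful_exists_almost_orthogonal_unit_vector
    {Γ : Type*} [Group Γ] [Countable Γ] (H : Subgroup Γ)
    (hhf : ∀ (n : ℕ) (γ : Fin n → Γ), (∀ i, γ i ≠ 1) →
      ∃ x : Γ ⧸ H, ∀ i, γ i • x ≠ x) :
    ∀ (n : ℕ) (γ : Fin n → Γ), (∀ i, γ i ≠ 1) → ∀ ε : ℝ, 0 < ε → ε < 1 →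
      ∃ f : lp (fun _ : Γ ⧸ H => ℂ) 2, ‖f‖ = 1 ∧
        ∀ i, ‖∑' x : Γ ⧸ H, f ((γ i)⁻¹ • x) * conj (f x)‖ ≤ ε :=
  highlyFaithful_exists_almost_orthogonal_unit_vector_general H hhf
end

section
/- Let (P, ≤) be a compact topological space equipped with a partial order whose graph {(x,y) : x ≤ y} is closed in P × P. Then every nonempty directed subset D of P has a least upper bound in P; moreover this least upper bound is a maximum element of the closure of D. -/
/-- In a compact space with a partial order whose graph is closed, every nonempty
directed subset has a least upper bound, which is moreover a maximum element of the
closure of the subset. -/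
theorem directedOn_exists_isLUB_of_compact {P : Type*} [TopologicalSpace P] [CompactSpace P]
    [PartialOrder P] (hclosed : IsClosed {p : P × P | p.1 ≤ p.2})
    (D : Set P) (hne : D.Nonempty) (hdir : DirectedOn (· ≤ ·) D) :
    ∃ u : P, IsLUB D u ∧ u ∈ closure D ∧ ∀ x ∈ closure D, x ≤ u := by
  haveI : OrderClosedTopology P := ⟨hclosed⟩
  haveI : Nonempty D := hne.to_subtype
  set F : Filter P := ⨅ d : D, Filter.principal (D ∩ Set.Ici (d : P)) with hF
  have hFne : F.NeBot := by
    apply Filter.iInf_neBot_of_directed'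
    · intro d e
      obtain ⟨c, hcD, hdc, hec⟩ := hdir d d.2 e e.2
      exact ⟨⟨c, hcD⟩, Filter.principal_mono.mpr (fun x hx => ⟨hx.1, hdc.trans hx.2⟩),
        Filter.principal_mono.mpr (fun x hx => ⟨hx.1, hec.trans hx.2⟩)⟩
    · intro d
      exact Filter.principal_neBot_iff.mpr ⟨d, d.2, le_refl _⟩
  obtain ⟨u, hu⟩ := exists_clusterPt_of_compactSpace F
  have hmem : ∀ d : D, D ∩ Set.Ici (d : P) ∈ F :=
    fun d => Filter.mem_iInf_of_mem d (Filter.mem_principal_self _)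
  have key : ∀ s : Set P, IsClosed s → s ∈ F → u ∈ s := by
    intro s hs hsF
    have : ClusterPt u (Filter.principal s) := hu.mono (Filter.le_principal_iff.mpr hsF)
    have := mem_closure_iff_clusterPt.mpr this
    rwa [hs.closure_eq] at this
  obtain ⟨d0, hd0⟩ := hne
  have hub : ∀ d ∈ D, d ≤ u := by
    intro d hd
    exact key (Set.Ici d) isClosed_Ici (Filter.mem_of_superset (hmem ⟨d, hd⟩) (fun x hx => hx.2))
  have huc : u ∈ closure D :=
    key (closure D) isClosed_closure
      (Filter.mem_of_superset (hmem ⟨d0, hd0⟩) (fun x hx => subset_closure hx.1))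
  refine ⟨u, ⟨hub, ?_⟩, huc, ?_⟩
  · intro v hv
    exact key (Set.Iic v) isClosed_Iic
      (Filter.mem_of_superset (hmem ⟨d0, hd0⟩) (fun x hx => hv hx.1))
  · intro x hx
    have : closure D ⊆ Set.Iic u :=
      closure_minimal (fun y hy => hub y hy) isClosed_Iic
    exact this hx
end
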